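/- The GHZ state |φ₀⟩ = (|000⟩+|111⟩)/√2 satisfies the Mermin-type equality ⟨φ₀| X⊗X⊗X − X⊗Y⊗Y − Y⊗X⊗Y − Y⊗Y⊗X |φ₀⟩ = 4, and 4 is the maximal eigenvalue of the operator X⊗X⊗X − X⊗Y⊗Y − Y⊗X⊗Y − Y⊗Y⊗X. -/

import Mathlib

open Matrix Finset
open scoped ComplexOrder Kronecker

noncomputable section

abbrev Q3 := Fin 2 × Fin 2 × Fin 2

def inn {n : Type*} [Fintype n] (v w : n → ℂ) : ℂ := ∑ i, star (v i) * w i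

def PX : Matrix (Fin 2) (Fin 2) ℂ := !![0, 1; 1, 0]
def PY : Matrix (Fin 2) (Fin 2) ℂ := !![0, -Complex.I; Complex.I, 0]

/-- The GHZ state `(|000⟩+|111⟩)/√2`. -/
def ghz0 : Q3 → ℂ := fun x =>
  ((1 / Real.sqrt 2 : ℝ) : ℂ) *
    ((if x = ((0 : Fin 2), (0 : Fin 2), (0 : Fin 2)) then 1 else 0)
      + (if x = ((1 : Fin 2), (1 : Fin 2), (1 : Fin 2)) then 1 else 0))

/-- The Mermin operator `XXX − XYY − YXY − YYX`. -/
def mermin : Matrix Q3 Q3 ℂ :=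
  PX ⊗ₖ (PX ⊗ₖ PX) - PX ⊗ₖ (PY ⊗ₖ PY) - PY ⊗ₖ (PX ⊗ₖ PY) - PY ⊗ₖ (PY ⊗ₖ PX)


/-!
Each of the four Pauli strings flips all three qubits. On the transitions `000 ↔ 111` the four
phases all equal `1`, while on every other transition they cancel, so the Mermin operator is
`4 (|000⟩⟨111| + |111⟩⟨000|)`. Hence the GHZ state is an eigenvector for the eigenvalue `4`, and
`4 - mermin` is `4` times the projection onto the complement of `span {|000⟩, |111⟩}` plus the
rank-one operator `4 |000 - 111⟩⟨000 - 111|`, which is positive semidefinite.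
-/

theorem one_sub_single_add_single_eq {n R : Type*} [DecidableEq n] [CommRing R] [StarRing R]
    {i j : n} (hij : i ≠ j) :
    (1 - (single i j 1 + single j i 1) : Matrix n n R) =
      diagonal (fun k => if k = i ∨ k = j then 0 else 1) +
        vecMulVec (Pi.single i 1 - Pi.single j 1) (star (Pi.single i 1 - Pi.single j 1)) := by
  ext k l
  by_cases hki : k = i <;> by_cases hkj : k = j <;> by_cases hli : l = i <;> by_cases hlj : l = j <;>
    simp_all [single_apply, one_apply, vecMulVec_apply, Pi.single_apply, diagonal_apply, eq_comm]

theorem posSemidef_one_sub_single_add_single {n R : Type*} [Fintype n] [DecidableEq n]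
    [CommRing R] [PartialOrder R] [StarRing R] [StarOrderedRing R] {i j : n} (hij : i ≠ j) :
    (1 - (single i j 1 + single j i 1) : Matrix n n R).PosSemidef := by
  rw [one_sub_single_add_single_eq hij]
  refine .add (.diagonal fun k => ?_) (posSemidef_vecMulVec_self_star _)
  split_ifs <;> simp

theorem inn_smul_right {n : Type*} [Fintype n] (v w : n → ℂ) (c : ℂ) :
    inn v (c • w) = c * inn v w := by
  simp only [inn, Pi.smul_apply, smul_eq_mul, Finset.mul_sum, mul_left_comm]

theorem mermin_eq :
    mermin = (4 : ℂ) • (single (0, 0, 0) (1, 1, 1) 1 + single (1, 1, 1) (0, 0, 0) 1) := by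
  ext ⟨a, b, c⟩ ⟨d, e, f⟩
  fin_cases a <;> fin_cases b <;> fin_cases c <;> fin_cases d <;> fin_cases e <;> fin_cases f <;>
    norm_num [mermin, PX, PY]

theorem mermin_mulVec_ghz0 : mermin *ᵥ ghz0 = (4 : ℂ) • ghz0 := by
  rw [mermin_eq]
  ext ⟨a, b, c⟩
  fin_cases a <;> fin_cases b <;> fin_cases c <;> simp [ghz0, add_mulVec, single_mulVec]

theorem inn_ghz0_self : inn ghz0 ghz0 = 1 := by
  have hsqrt : ((Real.sqrt 2 : ℝ) : ℂ) ^ 2 = 2 := by norm_cast; simp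
  norm_num [inn, ghz0, Fintype.sum_prod_type, ← sq, hsqrt]

/-- The GHZ state achieves the value `4` of the Mermin operator, and `4` is its
maximal eigenvalue (i.e. the operator is bounded above by `4·1`). -/
theorem stmt_19 :
    inn ghz0 (mermin.mulVec ghz0) = 4 ∧
      ((4 : ℂ) • (1 : Matrix Q3 Q3 ℂ) - mermin).PosSemidef := by
  refine ⟨by rw [mermin_mulVec_ghz0, inn_smul_right, inn_ghz0_self, mul_one], ?_⟩
  have hpsd := (posSemidef_one_sub_single_add_single (R := ℂ)
    (i := ((0 : Fin 2), (0 : Fin 2), (0 : Fin 2))) (j := (1, 1, 1)) (by decide)).smul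
    (show (0 : ℂ) ≤ 4 by norm_num)
  rwa [smul_sub, ← mermin_eq] at hpsd
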